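/- (Noether's theorem for the new Lagrangian formulation.) Let Γ : ℝ × ℝ^{2d} → ℝ^{2d} be smooth with Γ(0, y) = y for all y, and let Δ : ℝ × ℝ^{2d} × ℝ^{2d} × ℝ^n → ℝ^n be smooth with Δ(0, y, ẏ, u) = u. Writing y = (q, κ) ∈ ℝ^{2d} and regarding L̃ as a function 𝓛(y, ẏ, u) of position, velocity and control, assume the invariance 𝓛(Γ_s(y), D_yΓ_s(y)·ẏ, Δ_s(y, ẏ, u)) = 𝓛(y, ẏ, u) for all (s, y, ẏ, u). Let y = (q, κ) : [0,T] → ℝ^{2d} be C² and u : [0,T] → ℝ^n be C¹, satisfying the Euler–Lagrange equations (d/dt)[∇_ẏ𝓛(y, ẏ, u)] = ∇_y𝓛(y, ẏ, u) together with ∇_u𝓛(y, ẏ, u) = 0 on [0,T]. Then the momentum map t ↦ ⟨∇_ẏ𝓛(y(t), ẏ(t), u(t)), Y(y(t))⟩ is constant on [0,T], where Y(y) := ∂_sΓ(s, y)|_{s=0}; explicitly this quantity equals ⟨κ̇(t) + (D_2X_v(q,q̇,u))ᵀκ(t) − ∇_{v_q}C(q,q̇,u), Y_q(q(t),κ(t))⟩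 + ⟨q̇(t), Y_κ(q(t),κ(t))⟩, where Y = (Y_q, Y_κ). -/

import Mathlib

open scoped RealInnerProductSpace

set_option maxHeartbeats 1600000

set_option synthInstance.maxHeartbeats 400000

noncomputable section

/-- Euclidean space `ℝ^d`. -/
abbrev Ed (d : ℕ) : Type := EuclideanSpace ℝ (Fin d)

/-- `ℝ^{2d}`, realized as the `ℓ²`-product `ℝ^d × ℝ^d` (coordinates `y = (q, κ)`). -/
abbrev P2 (d : ℕ) : Type := WithLp 2 (Ed d × Ed d)

section Helpers

lemma coe_le_inf' {m : ℕ∞} : (m : WithTop ℕ∞) ≤ ((⊤ : ℕ∞) : WithTop ℕ∞) :=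
  WithTop.coe_le_coe.mpr le_top

lemma one_le_inf' : (1 : WithTop ℕ∞) ≤ ((⊤ : ℕ∞) : WithTop ℕ∞) := coe_le_inf'
lemma two_le_inf' : (2 : WithTop ℕ∞) ≤ ((⊤ : ℕ∞) : WithTop ℕ∞) := coe_le_inf'
lemma oneone_le_inf' : ((1 : WithTop ℕ∞) + 1) ≤ ((⊤ : ℕ∞) : WithTop ℕ∞) := coe_le_inf'
lemma infone_le_inf' : ((⊤ : ℕ∞) : WithTop ℕ∞) + 1 ≤ ((⊤ : ℕ∞) : WithTop ℕ∞) := by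
  rw [show (((⊤ : ℕ∞) : WithTop ℕ∞) + 1) = (((⊤ + 1 : ℕ∞)) : WithTop ℕ∞) by rfl]
  exact WithTop.coe_le_coe.mpr (by simp)

variable {E F G H : Type*}
  [NormedAddCommGroup E] [NormedSpace ℝ E]
  [NormedAddCommGroup F] [NormedSpace ℝ F]
  [NormedAddCommGroup G] [NormedSpace ℝ G]
  [NormedAddCommGroup H] [NormedSpace ℝ H]

lemma hasFDerivAt_slice1 {f : E × F × G → H} {a : E} {b : F} {c : G}
    (hf : DifferentiableAt ℝ f (a, b, c)) :
    HasFDerivAt (fun x : E => f (x, b, c))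
      ((fderiv ℝ f (a, b, c)).comp ((ContinuousLinearMap.id ℝ E).prod 0)) a :=
  hf.hasFDerivAt.comp a ((hasFDerivAt_id a).prodMk (hasFDerivAt_const (b, c) a))

lemma hasFDerivAt_slice2 {f : E × F × G → H} {a : E} {b : F} {c : G}
    (hf : DifferentiableAt ℝ f (a, b, c)) :
    HasFDerivAt (fun x : F => f (a, x, c))
      ((fderiv ℝ f (a, b, c)).comp
        ((0 : F →L[ℝ] E).prod ((ContinuousLinearMap.id ℝ F).prod 0))) b :=
  hf.hasFDerivAt.comp b
    ((hasFDerivAt_const a b).prodMk ((hasFDerivAt_id b).prodMk (hasFDerivAt_const c b)))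

lemma hasFDerivAt_slice3 {f : E × F × G → H} {a : E} {b : F} {c : G}
    (hf : DifferentiableAt ℝ f (a, b, c)) :
    HasFDerivAt (fun x : G => f (a, b, x))
      ((fderiv ℝ f (a, b, c)).comp
        ((0 : G →L[ℝ] E).prod ((0 : G →L[ℝ] F).prod (ContinuousLinearMap.id ℝ G)))) c :=
  hf.hasFDerivAt.comp c
    ((hasFDerivAt_const a c).prodMk ((hasFDerivAt_const b c).prodMk (hasFDerivAt_id c)))

lemma hasFDerivAt_sliceR {g : E × F → H} {a : E} {b : F}
    (hg : DifferentiableAt ℝ g (a, b)) :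
    HasFDerivAt (fun x : F => g (a, x))
      ((fderiv ℝ g (a, b)).comp ((0 : F →L[ℝ] E).prod (ContinuousLinearMap.id ℝ F))) b :=
  hg.hasFDerivAt.comp b ((hasFDerivAt_const a b).prodMk (hasFDerivAt_id b))

lemma hasDerivAt_sliceL {g : ℝ × F → H} {t : ℝ} {b : F}
    (hg : DifferentiableAt ℝ g (t, b)) :
    HasDerivAt (fun s => g (s, b)) (fderiv ℝ g (t, b) (1, 0)) t := by
  have h := hg.hasFDerivAt.comp t ((hasFDerivAt_id (𝕜 := ℝ) t).prodMk (hasFDerivAt_const b t))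
  simpa [Function.comp_def] using h.hasDerivAt

lemma inner_gradient_apply {F : Type*} [NormedAddCommGroup F] [InnerProductSpace ℝ F]
    [CompleteSpace F] (f : F → ℝ) (x v : F) :
    ⟪gradient f x, v⟫ = fderiv ℝ f x v := by
  simp [gradient, InnerProductSpace.toDual_symm_apply]

end Helpers

/-- First projection of `P2 d` as a continuous linear map. -/
def pfst (d : ℕ) : P2 d →L[ℝ] Ed d :=
  (ContinuousLinearMap.fst ℝ (Ed d) (Ed d)).comp
    (WithLp.prodContinuousLinearEquiv 2 ℝ (Ed d) (Ed d)).toContinuousLinearMap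

/-- Second projection of `P2 d` as a continuous linear map. -/
def psnd (d : ℕ) : P2 d →L[ℝ] Ed d :=
  (ContinuousLinearMap.snd ℝ (Ed d) (Ed d)).comp
    (WithLp.prodContinuousLinearEquiv 2 ℝ (Ed d) (Ed d)).toContinuousLinearMap

/-- Noether's theorem for the new Lagrangian formulation: if the new control Lagrangian
`𝓛(y, ẏ, u)` (with `y = (q, κ)`) is invariant under a one-parameter family of
transformations `Γ_s` of `(q,κ)`-space (acting on velocities by the tangent lift and
on controls by `Δ_s`), then along any solution of the Euler–Lagrange equations
together with `∇_u𝓛 = 0`, the momentum map `t ↦ ⟪∇_ẏ𝓛, Y(y)⟫`, explicitly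
`⟪κ̇ + (D₂X_v)ᵀκ − ∇_{v_q}C, Y_q⟫ + ⟪q̇, Y_κ⟫` with `Y = ∂_sΓ(s,·)|_{s=0}`, is
constant on `[0, T]`. -/
theorem noether_newLagrangian (d n : ℕ)
    (Xv : Ed d → Ed d → Ed n → Ed d)
    (C : Ed d → Ed d → Ed n → ℝ)
    (hXv : ContDiff ℝ (⊤ : ℕ∞) (fun p : (Ed d × Ed d) × Ed n => Xv p.1.1 p.1.2 p.2))
    (hC : ContDiff ℝ (⊤ : ℕ∞) (fun p : (Ed d × Ed d) × Ed n => C p.1.1 p.1.2 p.2))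
    (Γ : ℝ → P2 d → P2 d)
    (hΓ : ContDiff ℝ (⊤ : ℕ∞) (fun p : ℝ × P2 d => Γ p.1 p.2))
    (hΓ0 : ∀ y : P2 d, Γ 0 y = y)
    (Δ : ℝ → P2 d → P2 d → Ed n → Ed n)
    (hΔ : ContDiff ℝ (⊤ : ℕ∞)
      (fun p : (ℝ × (P2 d × P2 d)) × Ed n => Δ p.1.1 p.1.2.1 p.1.2.2 p.2))
    (hΔ0 : ∀ (y ydot : P2 d) (u : Ed n), Δ 0 y ydot u = u)
    (T : ℝ) (hT : 0 < T)
    (y : ℝ → P2 d) (u : ℝ → Ed n)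
    (hy : ContDiff ℝ 2 y) (hu : ContDiff ℝ 1 u) :
    -- the new control Lagrangian as a function 𝓛(y, ẏ, u)
    let Lag : P2 d → P2 d → Ed n → ℝ := fun z w c =>
      ⟪w.ofLp.2, w.ofLp.1⟫ + ⟪z.ofLp.2, Xv z.ofLp.1 w.ofLp.1 c⟫ - C z.ofLp.1 w.ofLp.1 c
    -- invariance of 𝓛 under the lifted action
    (∀ (s : ℝ) (z w : P2 d) (c : Ed n),
        Lag (Γ s z) (fderiv ℝ (Γ s) z w) (Δ s z w c) = Lag z w c) →
    -- Euler–Lagrange equations and vanishing of the control gradient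
    (∀ t ∈ Set.Icc (0 : ℝ) T,
        deriv (fun τ => gradient (fun w => Lag (y τ) w (u τ)) (deriv y τ)) t
          = gradient (fun z => Lag z (deriv y t) (u t)) (y t) ∧
        gradient (fun c => Lag (y t) (deriv y t) c) (u t) = 0) →
    -- conclusion: constancy of the momentum map, in its explicit form
    let Ygen : P2 d → P2 d := fun z => deriv (fun s => Γ s z) 0
    let Mom : ℝ → ℝ := fun t =>
      ⟪(deriv y t).ofLp.2
          + ContinuousLinearMap.adjoint
              (fderiv ℝ (fun x => Xv (y t).ofLp.1 x (u t)) (deriv y t).ofLp.1) (y t).ofLp.2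
          - gradient (fun x => C (y t).ofLp.1 x (u t)) (deriv y t).ofLp.1,
        (Ygen (y t)).ofLp.1⟫
      + ⟪(deriv y t).ofLp.1, (Ygen (y t)).ofLp.2⟫
    ∀ t₁ ∈ Set.Icc (0 : ℝ) T, ∀ t₂ ∈ Set.Icc (0 : ℝ) T, Mom t₁ = Mom t₂ := by
  intro Lag hinv hEL Ygen Mom
  -- abbreviations
  set g : ℝ × P2 d → P2 d := fun p => Γ p.1 p.2 with hg_def
  set L3 : P2 d × P2 d × Ed n → ℝ := fun p => Lag p.1 p.2.1 p.2.2 with hL3_def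
  set J2 : P2 d →L[ℝ] P2 d × P2 d × Ed n :=
    (0 : P2 d →L[ℝ] P2 d).prod ((ContinuousLinearMap.id ℝ (P2 d)).prod (0 : P2 d →L[ℝ] Ed n))
    with hJ2_def
  -- smoothness of L3
  have hXsm : ContDiff ℝ (⊤ : ℕ∞) (fun p : P2 d × P2 d × Ed n => Xv p.1.ofLp.1 p.2.1.ofLp.1 p.2.2) :=
    hXv.comp ((((pfst d).contDiff.comp contDiff_fst).prodMk
      ((pfst d).contDiff.comp (contDiff_fst.comp contDiff_snd))).prodMk
      (contDiff_snd.comp contDiff_snd))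
  have hCsm : ContDiff ℝ (⊤ : ℕ∞) (fun p : P2 d × P2 d × Ed n => C p.1.ofLp.1 p.2.1.ofLp.1 p.2.2) :=
    hC.comp ((((pfst d).contDiff.comp contDiff_fst).prodMk
      ((pfst d).contDiff.comp (contDiff_fst.comp contDiff_snd))).prodMk
      (contDiff_snd.comp contDiff_snd))
  have hL3 : ContDiff ℝ (⊤ : ℕ∞) L3 := by
    have h1 : ContDiff ℝ (⊤ : ℕ∞) (fun p : P2 d × P2 d × Ed n => (⟪p.2.1.ofLp.2, p.2.1.ofLp.1⟫ : ℝ)) :=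
      ContDiff.inner ℝ ((psnd d).contDiff.comp (contDiff_fst.comp contDiff_snd))
        ((pfst d).contDiff.comp (contDiff_fst.comp contDiff_snd))
    have h2 : ContDiff ℝ (⊤ : ℕ∞)
        (fun p : P2 d × P2 d × Ed n => (⟪p.1.ofLp.2, Xv p.1.ofLp.1 p.2.1.ofLp.1 p.2.2⟫ : ℝ)) :=
      ContDiff.inner ℝ ((psnd d).contDiff.comp contDiff_fst) hXsm
    exact (h1.add h2).sub hCsm
  have hL3d : Differentiable ℝ L3 := hL3.differentiable (by simp)
  have hgd : Differentiable ℝ g := hΓ.differentiable (by simp)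
  -- partial derivative identities
  have i1 : ContinuousSMul ℝ (P2 d) := inferInstance
  have hpart1 : ∀ (z w : P2 d) (c : Ed n) (v : P2 d),
      fderiv ℝ (fun z' => Lag z' w c) z v = fderiv ℝ L3 (z, w, c) (v, 0, 0) := by
    intro z w c v
    rw [show (fun z' => Lag z' w c) = fun x : P2 d => L3 (x, w, c) from rfl,
      (hasFDerivAt_slice1 (hL3d (z, w, c))).fderiv]
    rfl
  have hpart2 : ∀ (z w : P2 d) (c : Ed n) (v : P2 d),
      fderiv ℝ (fun w' => Lag z w' c) w v = fderiv ℝ L3 (z, w, c) (0, v, 0) := by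
    intro z w c v
    rw [show (fun w' => Lag z w' c) = fun x : P2 d => L3 (z, x, c) from rfl,
      (hasFDerivAt_slice2 (hL3d (z, w, c))).fderiv]
    rfl
  have hpart3 : ∀ (z w : P2 d) (c : Ed n) (v : Ed n),
      fderiv ℝ (fun c' => Lag z w c') c v = fderiv ℝ L3 (z, w, c) (0, 0, v) := by
    intro z w c v
    rw [show (fun c' => Lag z w c') = fun x : Ed n => L3 (z, w, x) from rfl,
      (hasFDerivAt_slice3 (hL3d (z, w, c))).fderiv]
    rfl
  have hfdw : ∀ (z w : P2 d) (c : Ed n),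
      fderiv ℝ (fun w' => Lag z w' c) w = (fderiv ℝ L3 (z, w, c)).comp J2 := by
    intro z w c
    rw [show (fun w' => Lag z w' c) = fun x : P2 d => L3 (z, x, c) from rfl]
    exact (hasFDerivAt_slice2 (hL3d (z, w, c))).fderiv
  -- the generator
  have hYder : ∀ z : P2 d, HasDerivAt (fun s => Γ s z) (fderiv ℝ g (0, z) (1, 0)) 0 :=
    fun z => hasDerivAt_sliceL (hgd (0, z))
  have hYform : ∀ z, Ygen z = fderiv ℝ g (0, z) (1, 0) := fun z => (hYder z).deriv
  have hYeq : Ygen = fun z => fderiv ℝ g (0, z) (1, 0) := funext hYform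
  have hg' : ContDiff ℝ (⊤ : ℕ∞) (fderiv ℝ g) := hΓ.fderiv_right infone_le_inf'
  have hYsm : ContDiff ℝ (⊤ : ℕ∞) Ygen := by
    rw [hYeq]
    exact (hg'.comp (contDiff_const.prodMk contDiff_id)).clm_apply contDiff_const
  -- derivative of the tangent-lift factor (Schwarz symmetry step)
  have hβ : ∀ (z w : P2 d),
      HasDerivAt (fun s => fderiv ℝ (Γ s) z w) (fderiv ℝ Ygen z w) 0 := by
    intro z w
    have hcurve : (fun s => fderiv ℝ (Γ s) z w) = fun s => fderiv ℝ g (s, z) (0, w) := by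
      funext s
      rw [show (Γ s) = fun x : P2 d => g (s, x) from rfl,
        (hasFDerivAt_sliceR (hgd (s, z))).fderiv]
      rfl
    have h1 : HasDerivAt (fun s => fderiv ℝ g (s, z)) (fderiv ℝ (fderiv ℝ g) (0, z) (1, 0)) 0 :=
      hasDerivAt_sliceL ((hg'.differentiable (by simp)) (0, z))
    have h2 : HasDerivAt (fun s => fderiv ℝ g (s, z) (0, w))
        (fderiv ℝ (fderiv ℝ g) (0, z) (1, 0) (0, w)) 0 := by
      simpa using h1.clm_apply (hasDerivAt_const (0 : ℝ) ((0 : ℝ), w))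
    have hsym : fderiv ℝ (fderiv ℝ g) (0, z) (1, 0) (0, w)
        = fderiv ℝ (fderiv ℝ g) (0, z) (0, w) (1, 0) :=
      (hΓ.contDiffAt.isSymmSndFDerivAt (by simp [minSmoothness]; exact two_le_inf')) _ _
    have h3 : HasFDerivAt (fun x : P2 d => fderiv ℝ g (0, x))
        ((fderiv ℝ (fderiv ℝ g) (0, z)).comp
          ((0 : P2 d →L[ℝ] ℝ).prod (ContinuousLinearMap.id ℝ (P2 d)))) z :=
      hasFDerivAt_sliceR ((hg'.differentiable (by simp)) (0, z))
    have h4 := h3.clm_apply (hasFDerivAt_const ((1 : ℝ), (0 : P2 d)) z)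
    have h5 : fderiv ℝ Ygen z w = fderiv ℝ (fderiv ℝ g) (0, z) (0, w) (1, 0) := by
      rw [hYeq, h4.fderiv]
      simp
    rw [hcurve, h5, ← hsym]
    exact h2
  -- differentiability of the control deformation
  have hδd : ∀ (z w : P2 d) (c : Ed n), DifferentiableAt ℝ (fun s => Δ s z w c) 0 := by
    intro z w c
    have hD : Differentiable ℝ
        (fun p : (ℝ × (P2 d × P2 d)) × Ed n => Δ p.1.1 p.1.2.1 p.1.2.2 p.2) :=
      hΔ.differentiable (by simp)
    exact ((hD.comp (((differentiable_id.prodMk (differentiable_const (z, w)))).prodMk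
      (differentiable_const c))) 0)
  -- the key invariance identity
  have key : ∀ (z w : P2 d) (c : Ed n),
      (⟪gradient (fun z' => Lag z' w c) z, Ygen z⟫
        + ⟪gradient (fun w' => Lag z w' c) w, fderiv ℝ Ygen z w⟫
        + ⟪gradient (fun c' => Lag z w c') c, deriv (fun s => Δ s z w c) 0⟫ : ℝ) = 0 := by
    intro z w c
    have hα : HasDerivAt (fun s => Γ s z) (Ygen z) 0 := (hYform z) ▸ hYder z
    have hδ : HasDerivAt (fun s => Δ s z w c) (deriv (fun s => Δ s z w c) 0) 0 :=
      (hδd z w c).hasDerivAt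
    have hcrv : HasDerivAt
        (fun s => ((Γ s z, fderiv ℝ (Γ s) z w, Δ s z w c) : P2 d × P2 d × Ed n))
        (Ygen z, fderiv ℝ Ygen z w, deriv (fun s => Δ s z w c) 0) 0 :=
      hα.prodMk ((hβ z w).prodMk hδ)
    have hpt : ((Γ 0 z, fderiv ℝ (Γ 0) z w, Δ 0 z w c) : P2 d × P2 d × Ed n) = (z, w, c) := by
      have h1 : Γ 0 = (id : P2 d → P2 d) := funext hΓ0
      rw [hΓ0, hΔ0, h1, fderiv_id]
      simp
    have hl : HasFDerivAt L3 (fderiv ℝ L3 (z, w, c))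
        ((Γ 0 z, fderiv ℝ (Γ 0) z w, Δ 0 z w c) : P2 d × P2 d × Ed n) := by
      rw [hpt]; exact (hL3d (z, w, c)).hasFDerivAt
    have hφ : HasDerivAt (fun s => L3 (Γ s z, fderiv ℝ (Γ s) z w, Δ s z w c))
        (fderiv ℝ L3 (z, w, c)
          (Ygen z, fderiv ℝ Ygen z w, deriv (fun s => Δ s z w c) 0)) 0 :=
      by have := hl.comp_hasDerivAt 0 hcrv; exact this
    have hconst : (fun s => L3 (Γ s z, fderiv ℝ (Γ s) z w, Δ s z w c))
        = fun _ : ℝ => Lag z w c := by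
      funext s; exact hinv s z w c
    have hzero : fderiv ℝ L3 (z, w, c)
        (Ygen z, fderiv ℝ Ygen z w, deriv (fun s => Δ s z w c) 0) = 0 := by
      have h0 := (hconst ▸ hφ).deriv
      rw [deriv_const] at h0
      exact h0.symm
    have hsplit : ((Ygen z, fderiv ℝ Ygen z w, deriv (fun s => Δ s z w c) 0)
          : P2 d × P2 d × Ed n)
        = (Ygen z, 0, 0) + (0, fderiv ℝ Ygen z w, 0)
          + (0, 0, deriv (fun s => Δ s z w c) 0) := by
      simp [Prod.ext_iff]
    rw [hsplit, map_add, map_add] at hzero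
    rw [inner_gradient_apply, inner_gradient_apply, inner_gradient_apply,
      hpart1, hpart2, hpart3]
    exact hzero
  -- explicit form of the velocity gradient
  have hXpd : ∀ (a : Ed d) (c : Ed n), Differentiable ℝ (fun x : Ed d => Xv a x c) :=
    fun a c => (hXv.differentiable (by simp)).comp
      (((differentiable_const a).prodMk differentiable_id).prodMk (differentiable_const c))
  have hCpd : ∀ (a : Ed d) (c : Ed n), Differentiable ℝ (fun x : Ed d => C a x c) :=
    fun a c => (hC.differentiable (by simp)).comp
      (((differentiable_const a).prodMk differentiable_id).prodMk (differentiable_const c))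
  have hgradw : ∀ (z w : P2 d) (c : Ed n),
      gradient (fun w' => Lag z w' c) w =
        (WithLp.equiv 2 (Ed d × Ed d)).symm
          (w.ofLp.2 + (ContinuousLinearMap.adjoint (fderiv ℝ (fun x => Xv z.ofLp.1 x c) w.ofLp.1)) z.ofLp.2
            - gradient (fun x => C z.ofLp.1 x c) w.ofLp.1, w.ofLp.1) := by
    intro z w c
    have hf1 : HasFDerivAt (fun w' : P2 d => (⟪w'.ofLp.2, w'.ofLp.1⟫ : ℝ))
        ((fderivInnerCLM ℝ (w.ofLp.2, w.ofLp.1)).comp ((psnd d).prod (pfst d))) w :=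
      HasFDerivAt.inner ℝ (psnd d).hasFDerivAt (pfst d).hasFDerivAt
    have hX1 : HasFDerivAt (fun x : Ed d => Xv z.ofLp.1 x c)
        (fderiv ℝ (fun x : Ed d => Xv z.ofLp.1 x c) w.ofLp.1) w.ofLp.1 :=
      ((hXpd z.ofLp.1 c) w.ofLp.1).hasFDerivAt
    have hf2 : HasFDerivAt (fun w' : P2 d => (⟪z.ofLp.2, Xv z.ofLp.1 w'.ofLp.1 c⟫ : ℝ))
        ((fderivInnerCLM ℝ ((z.ofLp.2 : Ed d), Xv z.ofLp.1 w.ofLp.1 c)).comp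
          ((0 : P2 d →L[ℝ] Ed d).prod
            ((fderiv ℝ (fun x : Ed d => Xv z.ofLp.1 x c) w.ofLp.1).comp (pfst d)))) w :=
      HasFDerivAt.inner ℝ (hasFDerivAt_const z.ofLp.2 w) (by have := hX1.comp w (pfst d).hasFDerivAt; exact this)
    have hC1 : HasFDerivAt (fun x : Ed d => C z.ofLp.1 x c)
        (fderiv ℝ (fun x : Ed d => C z.ofLp.1 x c) w.ofLp.1) w.ofLp.1 :=
      ((hCpd z.ofLp.1 c) w.ofLp.1).hasFDerivAt
    have hf3 : HasFDerivAt (fun w' : P2 d => C z.ofLp.1 w'.ofLp.1 c)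
        ((fderiv ℝ (fun x : Ed d => C z.ofLp.1 x c) w.ofLp.1).comp (pfst d)) w :=
      by have := hC1.comp w (pfst d).hasFDerivAt; exact this
    have htot := (hf1.add hf2).sub hf3
    have hgr : HasGradientAt (fun w' : P2 d => Lag z w' c)
        ((WithLp.equiv 2 (Ed d × Ed d)).symm
          (w.ofLp.2 + (ContinuousLinearMap.adjoint (fderiv ℝ (fun x => Xv z.ofLp.1 x c) w.ofLp.1)) z.ofLp.2
            - gradient (fun x => C z.ofLp.1 x c) w.ofLp.1, w.ofLp.1)) w := by
      rw [hasGradientAt_iff_hasFDerivAt]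
      refine htot.congr_fderiv ?_
      symm
      apply ContinuousLinearMap.ext
      intro h
      simp only [InnerProductSpace.toDual_apply_apply, ContinuousLinearMap.add_apply,
        ContinuousLinearMap.sub_apply, ContinuousLinearMap.comp_apply,
        ContinuousLinearMap.prod_apply, ContinuousLinearMap.zero_apply,
        fderivInnerCLM_apply]
      rw [WithLp.prod_inner_apply, WithLp.equiv_symm_apply, WithLp.ofLp_toLp]
      simp only [inner_add_left, inner_sub_left, ContinuousLinearMap.adjoint_inner_left,
        inner_gradient_apply, inner_zero_left]
      have hps : psnd d h = h.ofLp.2 := rfl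
      have hpf : pfst d h = h.ofLp.1 := rfl
      rw [hps, hpf, real_inner_comm w.ofLp.1 h.ofLp.2]
      ring
    exact hgr.gradient
  -- the momentum as an inner product
  set p : ℝ → P2 d := fun τ => gradient (fun w => Lag (y τ) w (u τ)) (deriv y τ) with hp_def
  have hMom_eq : ∀ t, Mom t = ⟪p t, Ygen (y t)⟫ := by
    intro t
    rw [show p t = gradient (fun w => Lag (y t) w (u t)) (deriv y t) from rfl,
      hgradw (y t) (deriv y t) (u t)]
    rfl
  -- smoothness of p
  have hderiv1 : ContDiff ℝ 1 (deriv y) :=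
    (contDiff_succ_iff_deriv.mp (by exact_mod_cast hy)).2.2
  have hp1 : ContDiff ℝ 1 p := by
    have hΦ : ContDiff ℝ 1 (fun x : P2 d × P2 d × Ed n =>
        (InnerProductSpace.toDual ℝ (P2 d)).symm ((fderiv ℝ L3 x).comp J2)) :=
      ((InnerProductSpace.toDual ℝ
          (P2 d)).symm.toContinuousLinearEquiv.toContinuousLinearMap.contDiff).comp
        ((hL3.fderiv_right oneone_le_inf').clm_comp contDiff_const)
    have hpe : p = fun t => (fun x : P2 d × P2 d × Ed n =>
        (InnerProductSpace.toDual ℝ (P2 d)).symm ((fderiv ℝ L3 x).comp J2))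
          (y t, deriv y t, u t) := by
      funext τ
      show gradient (fun w => Lag (y τ) w (u τ)) (deriv y τ) = _
      show (InnerProductSpace.toDual ℝ (P2 d)).symm
        (fderiv ℝ (fun w => Lag (y τ) w (u τ)) (deriv y τ)) = _
      rw [hfdw (y τ) (deriv y τ) (u τ)]
    rw [hpe]
    exact hΦ.comp ((hy.of_le one_le_two).prodMk (hderiv1.prodMk hu))
  -- the momentum function and its derivative
  set M : ℝ → ℝ := fun t => (⟪p t, Ygen (y t)⟫ : ℝ) with hM_def
  have hYyd : Differentiable ℝ (fun t => Ygen (y t)) :=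
    (hYsm.differentiable (by simp)).comp (hy.differentiable (by simp))
  have hMd : Differentiable ℝ M :=
    Differentiable.inner ℝ (hp1.differentiable (by simp)) hYyd
  have hM0 : ∀ t ∈ Set.Icc (0 : ℝ) T, HasDerivAt M 0 t := by
    intro t ht
    have hpt : HasDerivAt p (deriv p t) t := ((hp1.differentiable (by simp)) t).hasDerivAt
    have hyt : HasDerivAt y (deriv y t) t := ((hy.differentiable (by simp)) t).hasDerivAt
    have hYt : HasDerivAt (fun τ => Ygen (y τ)) (fderiv ℝ Ygen (y t) (deriv y t)) t :=
      ((hYsm.differentiable (by simp)) (y t)).hasFDerivAt.comp_hasDerivAt t hyt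
    have hMt : HasDerivAt M
        (⟪p t, fderiv ℝ Ygen (y t) (deriv y t)⟫ + ⟪deriv p t, Ygen (y t)⟫) t :=
      HasDerivAt.inner ℝ hpt hYt
    have hEL1 := (hEL t ht).1
    have hEL2 := (hEL t ht).2
    have hkey := key (y t) (deriv y t) (u t)
    rw [hEL2, inner_zero_left] at hkey
    have hpw : gradient (fun w' => Lag (y t) w' (u t)) (deriv y t) = p t := rfl
    rw [hpw, ← hEL1] at hkey
    have hval : (⟪p t, fderiv ℝ Ygen (y t) (deriv y t)⟫ + ⟪deriv p t, Ygen (y t)⟫ : ℝ) = 0 := by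
      linarith
    rw [hval] at hMt
    exact hMt
  intro t₁ ht₁ t₂ ht₂
  have hconst := constant_of_has_deriv_right_zero (f := M) (a := 0) (b := T)
    (hMd.continuous.continuousOn)
    (fun x hx => (hM0 x (Set.Ico_subset_Icc_self hx)).hasDerivWithinAt)
  calc Mom t₁ = M t₁ := hMom_eq t₁
    _ = M 0 := hconst t₁ ht₁
    _ = M t₂ := (hconst t₂ ht₂).symm
    _ = Mom t₂ := (hMom_eq t₂).symm
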